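/- For every integer k ≥ 1 and every integer s ≥ 1, if a k-uniform [1,s]-almost intersecting multihypergraph F has exactly s·(2k choose k) edges (counted with multiplicity), then F is [s,s]-almost intersecting, i.e. every edge of F is disjoint from exactly s edges of F counted with multiplicity. -/

import Mathlib

/-!
A permutation-counting argument in the style of Katona and Bollobás. Fix a linear ordering `σ`
of the ground set; an edge has a later partner if some edge disjoint from it lies entirely after
it. All such edges are disjoint from the edge whose least element comes latest, so for each `σ`
at most `s` edges have a later partner. Conversely, an edge `A` with a disjoint partner `B` has
one for at least the proportion `1 / (2k choose k)` of orderings in which `A` precedes `B`. As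
`|F| = s * (2k choose k)`, double counting forces exactly `s` such edges for every `σ`. Choosing
`σ` with a given edge `A` last, each of them is disjoint from `A`, so `A` is disjoint from at
least `s` edges.
-/

open Finset

theorem Finset.card_subtype_of_mem {α : Type*} {p : α → Prop} [DecidablePred p] {A : Finset α}
    (hA : ∀ x ∈ A, p x) : #(A.subtype p) = #A := by
  rw [← card_map (Function.Embedding.subtype p), subtype_map_of_mem hA]

theorem Finset.disjoint_subtype_iff {α : Type*} {p : α → Prop} [DecidablePred p]
    {A B : Finset α} (hA : ∀ x ∈ A, p x) (hB : ∀ x ∈ B, p x) :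
    Disjoint (A.subtype p) (B.subtype p) ↔ Disjoint A B := by
  rw [← disjoint_map (Function.Embedding.subtype p), subtype_map_of_mem hA, subtype_map_of_mem hB]

theorem Multiset.card_filter_le_card_filter {α : Type*} {m : Multiset α} {p q : α → Prop}
    [DecidablePred p] [DecidablePred q] (h : ∀ x ∈ m, p x → q x) :
    Multiset.card (m.filter p) ≤ Multiset.card (m.filter q) :=
  Multiset.card_le_card <| Multiset.le_filter.2 ⟨Multiset.filter_le p m, fun x hx =>
    h x (Multiset.mem_of_mem_filter hx) (Multiset.of_mem_filter hx)⟩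

theorem Multiset.sum_card_filter_eq_sum_map_card_filter {ι κ : Type*} (s : Finset ι)
    (m : Multiset κ) (r : ι → κ → Prop) [∀ i j, Decidable (r i j)] :
    ∑ i ∈ s, Multiset.card (m.filter (r i)) = (m.map fun j => #{i ∈ s | r i j}).sum := by
  induction m using Multiset.induction_on with
  | empty => simp
  | cons j m ih =>
    simp only [Multiset.filter_cons, Multiset.card_add, sum_add_distrib, ih, Multiset.map_cons,
      Multiset.sum_cons]
    congr 1
    rw [card_filter]
    exact sum_congr rfl fun i _ => by split_ifs <;> simp

theorem Multiset.card_filter_disjoint_map {α β : Type*} [DecidableEq α] [DecidableEq β]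
    {F : Multiset (Finset α)} {f : Finset α → Finset β}
    (hf : ∀ A ∈ F, ∀ B ∈ F, Disjoint (f A) (f B) ↔ Disjoint A B) {A : Finset α} (hA : A ∈ F) :
    Multiset.card ((F.map f).filter fun B => Disjoint (f A) B)
      = Multiset.card (F.filter fun B => Disjoint A B) := by
  rw [Multiset.filter_map, Multiset.card_map]
  exact congrArg _ (Multiset.filter_congr fun B hB => hf A hA B hB)

section Precedes

variable {β γ : Type*} [LinearOrder γ]

def Precedes (σ : β ≃ γ) (S T : Finset β) : Prop :=
  ∀ a ∈ S, ∀ b ∈ T, σ a < σ b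

instance (σ : β ≃ γ) (S T : Finset β) : Decidable (Precedes σ S T) := by
  unfold Precedes; infer_instance

theorem precedes_map_iff (σ : β ≃ γ) (π : Equiv.Perm β) (S T : Finset β) :
    Precedes σ (S.map π.toEmbedding) (T.map π.toEmbedding) ↔ Precedes (π.trans σ) S T := by
  simp only [Precedes, forall_mem_map]
  rfl

theorem exists_mem_forall_precedes_disjoint (σ : β ≃ γ) {𝒲 : Finset (Finset β)}
    (h𝒲 : 𝒲.Nonempty) : ∃ B₀ ∈ 𝒲, ∀ B ∈ 𝒲, ∀ C, Precedes σ C B → Disjoint C B₀ := by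
  obtain ⟨B₀, hB₀, hmax⟩ := 𝒲.exists_max_image (fun B => B.inf fun b => (σ b : WithTop γ)) h𝒲
  refine ⟨B₀, hB₀, fun B hB C hCB => disjoint_left.2 fun c hc hcB₀ => ?_⟩
  have hc_lt : (σ c : WithTop γ) < B.inf fun b => (σ b : WithTop γ) :=
    (Finset.lt_inf_iff (WithTop.coe_lt_top _)).2 fun b hb => WithTop.coe_lt_coe.2 (hCB c hc b hb)
  exact (hc_lt.trans_le (hmax B hB)).not_ge (inf_le hcB₀)

variable [DecidableEq β]

theorem exists_precedes_sdiff (σ : β ≃ γ) (D : Finset β) {a : ℕ} (ha : a ≤ #D) :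
    ∃ L ∈ D.powersetCard a, Precedes σ L (D \ L) := by
  induction a with
  | zero => exact ⟨∅, by simp, by simp [Precedes]⟩
  | succ a ih =>
    obtain ⟨L, hL, hLD⟩ := ih (by omega)
    rw [mem_powersetCard] at hL
    have hne : (D \ L).Nonempty := by
      rw [← card_pos, card_sdiff_of_subset hL.1]; omega
    obtain ⟨m, hm, hmin⟩ := (D \ L).exists_min_image σ hne
    have hmL : m ∉ L := (mem_sdiff.1 hm).2
    refine ⟨insert m L, mem_powersetCard.2 ⟨insert_subset (mem_sdiff.1 hm).1 hL.1, ?_⟩, ?_⟩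
    · rw [card_insert_of_notMem hmL, hL.2]
    intro x hx y hy
    rw [sdiff_insert, mem_erase] at hy
    rcases mem_insert.1 hx with rfl | hx
    · exact (hmin y hy.2).lt_of_ne (σ.injective.ne hy.1.symm)
    · exact hLD x hx y hy.2

theorem eq_of_precedes_sdiff {σ : β ≃ γ} {D L L' : Finset β} (hL : L ⊆ D) (hL' : L' ⊆ D)
    (hcard : #L = #L') (h : Precedes σ L (D \ L)) (h' : Precedes σ L' (D \ L')) : L = L' := by
  by_contra hne
  obtain ⟨x, hxL, hxL'⟩ := not_subset.1 fun hsub => hne (eq_of_subset_of_card_le hsub hcard.ge)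
  obtain ⟨y, hyL', hyL⟩ := not_subset.1 fun hsub =>
    hne (eq_of_subset_of_card_le hsub hcard.le).symm
  exact (h x hxL y (mem_sdiff.2 ⟨hL' hyL', hyL⟩)).asymm
    (h' y hyL' x (mem_sdiff.2 ⟨hL hxL, hxL'⟩))

theorem exists_perm_map_eq_of_subset {D S L : Finset β} (hS : S ⊆ D) (hL : L ⊆ D)
    (hcard : #S = #L) :
    ∃ π : Equiv.Perm β, S.map π.toEmbedding = L ∧ D.map π.toEmbedding = D := by
  let p : β → Prop := (· ∈ D)
  have := Set.powersetCard.isPretransitive (α := D) (n := #S)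
  obtain ⟨ρ, hρ⟩ := MulAction.exists_smul_eq (Equiv.Perm D)
    (⟨S.subtype p, Set.powersetCard.mem_iff.2 (card_subtype_of_mem hS)⟩ : Set.powersetCard D #S)
    ⟨L.subtype p, Set.powersetCard.mem_iff.2 ((card_subtype_of_mem hL).trans hcard.symm)⟩
  have hρ' : (S.subtype p).map ρ.toEmbedding = L.subtype p := by
    simpa [← Subtype.coe_inj, Set.powersetCard.coe_smul, smul_finset_def, map_eq_image] using hρ
  have hmap : ∀ {X : Finset β}, X ⊆ D → X.map (Equiv.Perm.ofSubtype ρ).toEmbedding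
      = ((X.subtype p).map ρ.toEmbedding).map (Function.Embedding.subtype p) := fun hX => by
    conv_lhs => rw [← subtype_map_of_mem hX]
    simp only [map_map]
    congr 1
    ext x
    simp [Equiv.Perm.ofSubtype_apply_coe]
  refine ⟨Equiv.Perm.ofSubtype ρ, ?_, ?_⟩
  · rw [hmap hS, hρ', subtype_map_of_mem hL]
  · refine eq_of_subset_of_card_le ?_ (card_map _).ge
    rw [hmap subset_rfl]
    intro x hx
    obtain ⟨y, -, rfl⟩ := mem_map.1 hx
    exact y.2

variable [Fintype β] [Fintype γ]

theorem card_filter_precedes_map (π : Equiv.Perm β) (S T : Finset β) :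
    #{σ : β ≃ γ | Precedes σ (S.map π.toEmbedding) (T.map π.toEmbedding)}
      = #{σ : β ≃ γ | Precedes σ S T} :=
  card_equiv (Equiv.equivCongr π.symm (Equiv.refl γ)) fun σ => by
    simp only [mem_filter, mem_univ, true_and, precedes_map_iff]
    rfl

theorem card_filter_precedes_mul_choose {S T : Finset β} (hST : Disjoint S T) :
    #{σ : β ≃ γ | Precedes σ S T} * (#S + #T).choose #S = Fintype.card (β ≃ γ) := by
  obtain ⟨D, hD⟩ : ∃ D, D = S ∪ T := ⟨_, rfl⟩
  have hfiber : ∀ L ∈ D.powersetCard #S,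
      #{σ : β ≃ γ | Precedes σ L (D \ L)} = #{σ : β ≃ γ | Precedes σ S T} := by
    intro L hL
    obtain ⟨hLD, hLS⟩ := mem_powersetCard.1 hL
    obtain ⟨π, rfl, hπD⟩ := exists_perm_map_eq_of_subset (hD ▸ subset_union_left) hLD hLS.symm
    have hT : D \ S.map π.toEmbedding = T.map π.toEmbedding := by
      conv_lhs => rw [← hπD]
      rw [← Finset.map_sdiff, hD, union_sdiff_cancel_left hST]
    rw [hT, card_filter_precedes_map]
  have hunique : ∀ σ : β ≃ γ, #{L ∈ D.powersetCard #S | Precedes σ L (D \ L)} = 1 := by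
    intro σ
    obtain ⟨L, hL, hσL⟩ := exists_precedes_sdiff σ D (a := #S) (hD ▸ card_le_card subset_union_left)
    refine card_eq_one.2 ⟨L, eq_singleton_iff_unique_mem.2 ⟨mem_filter.2 ⟨hL, hσL⟩, ?_⟩⟩
    intro L' hL'
    obtain ⟨hL', hσL'⟩ := mem_filter.1 hL'
    rw [mem_powersetCard] at hL hL'
    exact eq_of_precedes_sdiff hL'.1 hL.1 (hL'.2.trans hL.2.symm) hσL' hσL
  calc #{σ : β ≃ γ | Precedes σ S T} * (#S + #T).choose #S
      = ∑ L ∈ D.powersetCard #S, #{σ : β ≃ γ | Precedes σ L (D \ L)} := by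
        rw [sum_congr rfl hfiber, sum_const, card_powersetCard, hD, card_union_of_disjoint hST,
          smul_eq_mul, mul_comm]
    _ = ∑ σ : β ≃ γ, #{L ∈ D.powersetCard #S | Precedes σ L (D \ L)} :=
        (sum_card_bipartiteAbove_eq_sum_card_bipartiteBelow _).symm
    _ = Fintype.card (β ≃ γ) := by simp [hunique]

theorem exists_precedes_of_disjoint [Nonempty (β ≃ γ)] {S T : Finset β} (hST : Disjoint S T) :
    ∃ σ : β ≃ γ, Precedes σ S T := by
  have hpos := card_filter_precedes_mul_choose (γ := γ) hST ▸ Fintype.card_pos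
  obtain ⟨σ, hσ⟩ := card_pos.1 (pos_of_mul_pos_left hpos (Nat.zero_le _))
  exact ⟨σ, (mem_filter.1 hσ).2⟩

end Precedes

section LaterPartner

variable {β γ : Type*} [DecidableEq β] [LinearOrder γ]

def HasLaterPartner (F : Multiset (Finset β)) (σ : β ≃ γ) (A : Finset β) : Prop :=
  ∃ B ∈ F, Disjoint A B ∧ Precedes σ A B

instance (F : Multiset (Finset β)) (σ : β ≃ γ) : DecidablePred (HasLaterPartner F σ) :=
  fun _ => by unfold HasLaterPartner; exact Multiset.decidableExistsMultiset

theorem card_filter_hasLaterPartner_le {s : ℕ} {F : Multiset (Finset β)}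
    (hai : ∀ A ∈ F, Multiset.card (F.filter fun B => Disjoint A B) ≤ s) (σ : β ≃ γ) :
    Multiset.card (F.filter (HasLaterPartner F σ)) ≤ s := by
  rcases F.empty_or_exists_mem with rfl | ⟨A, hA⟩
  · simp
  obtain ⟨B₀, hB₀, hlast⟩ := exists_mem_forall_precedes_disjoint σ
    (𝒲 := F.toFinset) ⟨A, Multiset.mem_toFinset.2 hA⟩
  rw [Multiset.mem_toFinset] at hB₀
  refine (Multiset.card_filter_le_card_filter fun C _ hC => ?_).trans (hai B₀ hB₀)
  obtain ⟨B, hB, -, hCB⟩ := hC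
  exact (hlast B (Multiset.mem_toFinset.2 hB) C hCB).symm

theorem disjoint_of_hasLaterPartner [Fintype β] {F : Multiset (Finset β)} {σ : β ≃ γ}
    {A C : Finset β} (huniform : ∀ B ∈ F, #B = #A) (hσ : Precedes σ Aᶜ A)
    (hC : HasLaterPartner F σ C) : Disjoint A C := by
  obtain ⟨B, hB, hCB, hσCB⟩ := hC
  refine disjoint_right.2 fun c hc hcA => ?_
  have hBA : B ⊆ A := fun b hb => by
    by_contra hbA
    exact (hσ b (mem_compl.2 hbA) c hcA).asymm (hσCB c hc b hb)
  rw [eq_of_subset_of_card_le hBA (huniform B hB).ge] at hCB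
  exact disjoint_left.1 hCB hc hcA

theorem card_filter_hasLaterPartner_eq [Fintype β] [Fintype γ] {k s : ℕ}
    {F : Multiset (Finset β)} (huniform : ∀ A ∈ F, #A = k)
    (hai : ∀ A ∈ F,
      1 ≤ Multiset.card (F.filter fun B => Disjoint A B) ∧
      Multiset.card (F.filter fun B => Disjoint A B) ≤ s)
    (hcard : Multiset.card F = s * (2 * k).choose k) (σ : β ≃ γ) :
    Multiset.card (F.filter (HasLaterPartner F σ)) = s := by
  have hY : ∀ A ∈ F,
      Fintype.card (β ≃ γ) ≤ #{σ : β ≃ γ | HasLaterPartner F σ A} * (2 * k).choose k := by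
    intro A hA
    obtain ⟨B, hB⟩ := Multiset.card_pos_iff_exists_mem.1 (hai A hA).1
    obtain ⟨hBF, hAB⟩ := Multiset.mem_filter.1 hB
    rw [← card_filter_precedes_mul_choose hAB, huniform A hA, huniform B hBF, ← two_mul]
    gcongr with σ
    exact fun hσ => ⟨B, hBF, hAB, hσ⟩
  have hsum : Fintype.card (β ≃ γ) * s
      ≤ ∑ σ : β ≃ γ, Multiset.card (F.filter (HasLaterPartner F σ)) := by
    rw [Multiset.sum_card_filter_eq_sum_map_card_filter]
    refine Nat.le_of_mul_le_mul_right ?_ (Nat.choose_pos (by omega : k ≤ 2 * k))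
    calc Fintype.card (β ≃ γ) * s * (2 * k).choose k
        = Multiset.card F • Fintype.card (β ≃ γ) := by rw [hcard, smul_eq_mul]; ring
      _ ≤ (F.map fun A => #{σ : β ≃ γ | HasLaterPartner F σ A} * (2 * k).choose k).sum := by
          rw [← Multiset.card_map fun A => #{σ : β ≃ γ | HasLaterPartner F σ A} * (2 * k).choose k]
          exact Multiset.card_nsmul_le_sum (Multiset.forall_mem_map_iff.2 hY)
      _ = _ := Multiset.sum_map_mul_right
  have hle := card_filter_hasLaterPartner_le (fun A hA => (hai A hA).2) (γ := γ)
  refine (sum_eq_sum_iff_of_le fun σ _ => hle σ).1 (le_antisymm (sum_le_sum fun σ _ => hle σ) ?_)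
    σ (mem_univ σ)
  simpa [mul_comm] using hsum

theorem card_filter_disjoint_eq_of_card_eq_mul_choose [Fintype β] {k s : ℕ}
    {F : Multiset (Finset β)} (huniform : ∀ A ∈ F, #A = k)
    (hai : ∀ A ∈ F,
      1 ≤ Multiset.card (F.filter fun B => Disjoint A B) ∧
      Multiset.card (F.filter fun B => Disjoint A B) ≤ s)
    (hcard : Multiset.card F = s * (2 * k).choose k) :
    ∀ A ∈ F, Multiset.card (F.filter fun B => Disjoint A B) = s := by
  intro A hA
  have : Nonempty (β ≃ Fin (Fintype.card β)) := ⟨Fintype.equivFin β⟩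
  obtain ⟨σ, hσ⟩ :=
    exists_precedes_of_disjoint (γ := Fin (Fintype.card β)) (disjoint_compl_left (a := A))
  refine le_antisymm (hai A hA).2 ?_
  rw [← card_filter_hasLaterPartner_eq huniform hai hcard σ]
  exact Multiset.card_filter_le_card_filter fun C _ hC => disjoint_of_hasLaterPartner
    (fun B hB => (huniform B hB).trans (huniform A hA).symm) hσ hC

end LaterPartner

theorem stmt_2_general {α : Type*} [DecidableEq α] (k s : ℕ)
    (F : Multiset (Finset α))
    (huniform : ∀ A ∈ F, A.card = k)
    (hai : ∀ A ∈ F,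
      1 ≤ Multiset.card (F.filter fun B => Disjoint A B) ∧
      Multiset.card (F.filter fun B => Disjoint A B) ≤ s)
    (hcard : Multiset.card F = s * Nat.choose (2 * k) k) :
    ∀ A ∈ F, Multiset.card (F.filter fun B => Disjoint A B) = s := by
  -- orderings need a finite ground set: pass to the union `Ω` of the edges
  set Ω := F.toFinset.sup id
  have hΩ : ∀ A ∈ F, ∀ x ∈ A, x ∈ Ω := fun A hA x hx =>
    le_sup (f := id) (Multiset.mem_toFinset.2 hA) hx
  have hdisj : ∀ A ∈ F, ∀ B ∈ F,
      Disjoint (A.subtype (· ∈ Ω)) (B.subtype (· ∈ Ω)) ↔ Disjoint A B :=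
    fun A hA B hB => disjoint_subtype_iff (hΩ A hA) (hΩ B hB)
  intro A hA
  rw [← Multiset.card_filter_disjoint_map hdisj hA]
  refine card_filter_disjoint_eq_of_card_eq_mul_choose (k := k) ?_ ?_ (by rwa [Multiset.card_map])
    _ (Multiset.mem_map_of_mem _ hA)
  · simp only [Multiset.forall_mem_map_iff]
    intro B hB
    rw [card_subtype_of_mem (hΩ B hB), huniform B hB]
  · simp only [Multiset.forall_mem_map_iff]
    intro B hB
    rw [Multiset.card_filter_disjoint_map hdisj hB]
    exact hai B hB

/-- If a `k`-uniform `[1,s]`-almost intersecting multihypergraph has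
exactly `s * (2k choose k)` edges, then it is `[s,s]`-almost intersecting. -/
theorem stmt_2 {α : Type*} [DecidableEq α] (k s : ℕ) (hk : 1 ≤ k) (hs : 1 ≤ s)
    (F : Multiset (Finset α))
    (huniform : ∀ A ∈ F, A.card = k)
    (hai : ∀ A ∈ F,
      1 ≤ Multiset.card (F.filter fun B => Disjoint A B) ∧
      Multiset.card (F.filter fun B => Disjoint A B) ≤ s)
    (hcard : Multiset.card F = s * Nat.choose (2 * k) k) :
    ∀ A ∈ F, Multiset.card (F.filter fun B => Disjoint A B) = s :=
  stmt_2_general k s F huniform hai hcard
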